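/- Let d ∈ {1,2,3,7,11} and a₁,…,a_n ∈ ℤ[ω_d]. If R = [a₁,…,a_n] is a geodesic continued fraction expansion — i.e., the walk ∞ → 0 → [a₁] → [a₁,a₂] → ⋯ → [a₁,…,a_n] along its convergents is a geodesic path in the Farey graph E_d — then the reversed expansion R* = [a_n, a_{n−1}, …, a₁] is also a geodesic continued fraction expansion. -/

import Mathlib

/-- `ω_d`: the generator of the ring of integers of `ℚ(√(-d))`. -/
noncomputable def omegaD (d : ℕ) : ℂ :=
  if d % 4 = 3 then (1 + Complex.I * Real.sqrt d) / 2 else Complex.I * Real.sqrt d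

/-- The ring of integers `ℤ[ω_d]` of `ℚ(√(-d))`, as a subset of `ℂ`. -/
def ringInt (d : ℕ) : Set ℂ := {z | ∃ a b : ℤ, z = (a : ℂ) + (b : ℂ) * omegaD d}

/-- `p` and `q` are coprime in `ℤ[ω_d]`. -/
def CoprimeIn (d : ℕ) (p q : ℂ) : Prop :=
  ∃ u v : ℂ, u ∈ ringInt d ∧ v ∈ ringInt d ∧ u * p + v * q = 1

/-- `x` is an element of the field `ℚ(√(-d)) ⊆ ℂ`. -/
def inK (d : ℕ) (x : ℂ) : Prop :=
  ∃ p q : ℂ, p ∈ ringInt d ∧ q ∈ ringInt d ∧ q ≠ 0 ∧ x = p / q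

/-- The point `p/q` of `ℂ ∪ {∞}`, with `p/0 = ∞`. -/
noncomputable def divC (p q : ℂ) : OnePoint ℂ :=
  if q = 0 then OnePoint.infty else ((p / q : ℂ) : OnePoint ℂ)

/-- Two points of `ℚ(√(-d)) ∪ {∞}` are Farey neighbours (joined by an edge of
the Farey graph `E_d`) if they have coprime representations `p₁/q₁`, `p₂/q₂`
with `|p₁q₂ − p₂q₁| = 1`. -/
def FareyAdj (d : ℕ) (x y : OnePoint ℂ) : Prop :=
  ∃ p₁ q₁ p₂ q₂ : ℂ, p₁ ∈ ringInt d ∧ q₁ ∈ ringInt d ∧ p₂ ∈ ringInt d ∧ q₂ ∈ ringInt d ∧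
    CoprimeIn d p₁ q₁ ∧ CoprimeIn d p₂ q₂ ∧ x = divC p₁ q₁ ∧ y = divC p₂ q₂ ∧
    ‖p₁ * q₂ - p₂ * q₁‖ = 1

/-- `f 0 → f 1 → ⋯ → f n` is a walk (of length `n`) in the Farey graph `E_d`. -/
def IsWalk (d n : ℕ) (f : ℕ → OnePoint ℂ) : Prop := ∀ k, k < n → FareyAdj d (f k) (f (k + 1))

/-- `f 0 → ⋯ → f n` is a geodesic path in `E_d`: a walk of minimal length
among all walks with the same endpoints. -/
def IsGeodesicWalk (d n : ℕ) (f : ℕ → OnePoint ℂ) : Prop :=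
  IsWalk d n f ∧ ∀ (m : ℕ) (g : ℕ → OnePoint ℂ), IsWalk d m g → g 0 = f 0 → g m = f n → n ≤ m

/-- Numerators of the convergents of `[a₁, a₂, …]` (`a 0` is unused):
`p₀ = 0`, `p₁ = 1`, `p_k = a_k p_{k−1} + p_{k−2}`. -/
noncomputable def cfP (a : ℕ → ℂ) : ℕ → ℂ
  | 0 => 0
  | 1 => 1
  | (k + 2) => a (k + 2) * cfP a (k + 1) + cfP a k

/-- Denominators of the convergents of `[a₁, a₂, …]`:
`q₀ = 1`, `q₁ = a₁`, `q_k = a_k q_{k−1} + q_{k−2}`. -/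
noncomputable def cfQ (a : ℕ → ℂ) : ℕ → ℂ
  | 0 => 1
  | 1 => a 1
  | (k + 2) => a (k + 2) * cfQ a (k + 1) + cfQ a k

/-- The walk `∞ → p₀/q₀ = 0 → p₁/q₁ → ⋯` along the convergents of `[a₁, a₂, …]`. -/
noncomputable def cfWalk (a : ℕ → ℂ) : ℕ → OnePoint ℂ :=
  fun k => if k = 0 then OnePoint.infty else divC (cfP a (k - 1)) (cfQ a (k - 1))

/-!
Let `M_k = A₁ ⋯ A_k` with `A_i = !![0, 1; 1, a_i]`, so that the columns of `M_k` are the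
vertices `k` and `k + 1` of the convergent walk. Every `A_i` is symmetric, so reversing the
expansion transposes the product: for `n = j + m`, `M_n = M_j · (M*_m)ᵀ`, where `M*` belongs to
the reversed expansion. Since `Nᵀ J N = det N • J` for `J = !![0, 1; -1, 0]`, the Möbius map of
`T = M_n J`, an automorphism of `E_d`, sends the vertices `0` and `m + 1` of the reversed walk to
the vertices `n + 1` and `j` of the original one. A walk of length `L` from `∞` to vertex `m + 1`
of the reversed walk thus gives, after the first `j` steps of the original walk, a walk of length
`j + L` from `∞` to `[a₁, …, a_n]`; geodesicity forces `j + L ≥ n + 1`, i.e. `L ≥ m + 1`.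
-/

open Matrix OnePoint

lemma omegaD_mul_self (d : ℕ) : ∃ r s : ℤ, omegaD d * omegaD d = r + s * omegaD d := by
  have hsq : (Real.sqrt d : ℂ) * Real.sqrt d = d := by
    norm_cast
    exact Real.mul_self_sqrt (Nat.cast_nonneg d)
  unfold omegaD
  split_ifs with h
  · -- `ω² = ω - (d + 1)/4`
    obtain ⟨k, hk⟩ : 4 ∣ d + 1 := by omega
    have hk' : (d : ℂ) + 1 = 4 * k := by exact_mod_cast hk
    refine ⟨-k, 1, ?_⟩
    push_cast
    linear_combination (-1 / 4 : ℂ) * hsq + ((Real.sqrt d : ℂ) * Real.sqrt d / 4) * Complex.I_mul_I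
      - (1 / 4 : ℂ) * hk'
  · refine ⟨-d, 0, ?_⟩
    push_cast
    linear_combination ((Real.sqrt d : ℂ) * Real.sqrt d) * Complex.I_mul_I - hsq

def ringIntSubring (d : ℕ) : Subring ℂ where
  carrier := ringInt d
  zero_mem' := ⟨0, 0, by simp⟩
  one_mem' := ⟨1, 0, by simp⟩
  add_mem' := by
    rintro _ _ ⟨a, b, rfl⟩ ⟨c, e, rfl⟩
    exact ⟨a + c, b + e, by push_cast; ring⟩
  neg_mem' := by
    rintro _ ⟨a, b, rfl⟩
    exact ⟨-a, -b, by push_cast; ring⟩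
  mul_mem' := by
    rintro _ _ ⟨a, b, rfl⟩ ⟨c, e, rfl⟩
    obtain ⟨r, s, hrs⟩ := omegaD_mul_self d
    exact ⟨a * c + b * e * r, a * e + b * c + b * e * s, by
      push_cast; linear_combination ((b : ℂ) * e) * hrs⟩

lemma divC_mul_mul {c : ℂ} (hc : c ≠ 0) (p q : ℂ) : divC (c * p) (c * q) = divC p q := by
  by_cases hq : q = 0
  · simp [divC, hq]
  · simp [divC, hq, hc, mul_div_mul_left]

lemma smul_divC (g : GL (Fin 2) ℂ) {p q : ℂ} (hpq : ¬(p = 0 ∧ q = 0)) :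
    g • divC p q = divC (g 0 0 * p + g 0 1 * q) (g 1 0 * p + g 1 1 * q) := by
  by_cases hq : q = 0
  · have hp : p ≠ 0 := fun hp => hpq ⟨hp, hq⟩
    subst hq
    have : g • divC p 0 = divC (g 0 0) (g 1 0) := by
      rw [show divC p 0 = ∞ from if_pos rfl, smul_infty_eq_ite]; rfl
    rw [this, ← divC_mul_mul hp]
    ring_nf
  · have : g • divC p q = divC (g 0 0 * (p / q) + g 0 1) (g 1 0 * (p / q) + g 1 1) := by
      rw [show divC p q = ((p / q : ℂ) : OnePoint ℂ) from if_neg hq, smul_some_eq_ite]; rfl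
    rw [this, ← divC_mul_mul hq]
    congr 1 <;> field_simp

def IsUnimodularIn (d : ℕ) (g : Matrix (Fin 2) (Fin 2) ℂ) : Prop :=
  (∀ i j, g i j ∈ ringInt d) ∧ (g.det = 1 ∨ g.det = -1)

variable {d : ℕ}

namespace IsUnimodularIn

variable {g h : Matrix (Fin 2) (Fin 2) ℂ}

lemma det_mem (hg : IsUnimodularIn d g) : g.det ∈ ringInt d := by
  rcases hg.2 with h | h <;> rw [h]
  exacts [(ringIntSubring d).one_mem, (ringIntSubring d).neg_mem (ringIntSubring d).one_mem]

lemma det_mul_self (hg : IsUnimodularIn d g) : g.det * g.det = 1 := by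
  rcases hg.2 with h | h <;> rw [h] <;> norm_num

lemma det_ne_zero (hg : IsUnimodularIn d g) : g.det ≠ 0 :=
  left_ne_zero_of_mul_eq_one hg.det_mul_self

lemma mul (hg : IsUnimodularIn d g) (hh : IsUnimodularIn d h) : IsUnimodularIn d (g * h) := by
  refine ⟨fun i j => ?_, ?_⟩
  · rw [mul_apply]
    exact (ringIntSubring d).sum_mem fun k _ => (ringIntSubring d).mul_mem (hg.1 i k) (hh.1 k j)
  · rw [det_mul]
    rcases hg.2 with h₁ | h₁ <;> rcases hh.2 with h₂ | h₂ <;> simp [h₁, h₂]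

end IsUnimodularIn

lemma CoprimeIn.not_both_zero {p q : ℂ} (h : CoprimeIn d p q) : ¬(p = 0 ∧ q = 0) := by
  rintro ⟨rfl, rfl⟩
  obtain ⟨u, v, -, -, huv⟩ := h
  simp at huv

lemma CoprimeIn.unimodular_map {g : Matrix (Fin 2) (Fin 2) ℂ} (hg : IsUnimodularIn d g)
    {p q : ℂ} (h : CoprimeIn d p q) :
    CoprimeIn d (g 0 0 * p + g 0 1 * q) (g 1 0 * p + g 1 1 * q) := by
  set S := ringIntSubring d
  obtain ⟨u, v, hu, hv, huv⟩ := h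
  -- multiply `(u, v)` by `g⁻¹ = det g • adjugate g`
  refine ⟨g.det * (u * g 1 1 - v * g 1 0), g.det * (v * g 0 0 - u * g 0 1),
    S.mul_mem hg.det_mem (S.sub_mem (S.mul_mem hu (hg.1 1 1)) (S.mul_mem hv (hg.1 1 0))),
    S.mul_mem hg.det_mem (S.sub_mem (S.mul_mem hv (hg.1 0 0)) (S.mul_mem hu (hg.1 0 1))), ?_⟩
  have hdet := det_fin_two g
  linear_combination -(g.det * (u * p + v * q)) * hdet + g.det ^ 2 * huv + hg.det_mul_self

lemma FareyAdj.symm {x y : OnePoint ℂ} (h : FareyAdj d x y) : FareyAdj d y x := by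
  obtain ⟨p₁, q₁, p₂, q₂, hp₁, hq₁, hp₂, hq₂, hc₁, hc₂, rfl, rfl, hdet⟩ := h
  refine ⟨p₂, q₂, p₁, q₁, hp₂, hq₂, hp₁, hq₁, hc₂, hc₁, rfl, rfl, ?_⟩
  rw [← norm_neg, neg_sub, hdet]

lemma FareyAdj.smul {g : GL (Fin 2) ℂ} (hg : IsUnimodularIn d g) {x y : OnePoint ℂ}
    (h : FareyAdj d x y) : FareyAdj d (g • x) (g • y) := by
  set S := ringIntSubring d
  obtain ⟨p₁, q₁, p₂, q₂, hp₁, hq₁, hp₂, hq₂, hc₁, hc₂, rfl, rfl, hdet⟩ := h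
  have hmem : ∀ i, ∀ {p q : ℂ}, p ∈ ringInt d → q ∈ ringInt d → g i 0 * p + g i 1 * q ∈ ringInt d :=
    fun i p q hp hq => S.add_mem (S.mul_mem (hg.1 i 0) hp) (S.mul_mem (hg.1 i 1) hq)
  refine ⟨_, _, _, _, hmem 0 hp₁ hq₁, hmem 1 hp₁ hq₁, hmem 0 hp₂ hq₂, hmem 1 hp₂ hq₂,
    hc₁.unimodular_map hg, hc₂.unimodular_map hg, smul_divC g hc₁.not_both_zero,
    smul_divC g hc₂.not_both_zero, ?_⟩
  have hnorm : ‖(g : Matrix (Fin 2) (Fin 2) ℂ).det‖ = 1 := by rcases hg.2 with h | h <;> simp [h]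
  rw [← hdet, ← one_mul ‖p₁ * q₂ - p₂ * q₁‖, ← hnorm, ← norm_mul, det_fin_two]
  congr 1
  ring

lemma IsUnimodularIn.fareyAdj_columns {g : Matrix (Fin 2) (Fin 2) ℂ} (hg : IsUnimodularIn d g) :
    FareyAdj d (divC (g 0 0) (g 1 0)) (divC (g 0 1) (g 1 1)) := by
  set S := ringIntSubring d
  have hdet := det_fin_two g
  refine ⟨_, _, _, _, hg.1 0 0, hg.1 1 0, hg.1 0 1, hg.1 1 1, ?_, ?_, rfl, rfl, ?_⟩
  · exact ⟨g.det * g 1 1, -(g.det * g 0 1), S.mul_mem hg.det_mem (hg.1 1 1),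
      S.neg_mem (S.mul_mem hg.det_mem (hg.1 0 1)),
      by linear_combination -g.det * hdet + hg.det_mul_self⟩
  · exact ⟨-(g.det * g 1 0), g.det * g 0 0, S.neg_mem (S.mul_mem hg.det_mem (hg.1 1 0)),
      S.mul_mem hg.det_mem (hg.1 0 0),
      by linear_combination -g.det * hdet + hg.det_mul_self⟩
  · rw [← hdet]
    rcases hg.2 with h | h <;> simp [h]

namespace IsWalk

variable {m n : ℕ} {f f' : ℕ → OnePoint ℂ}

lemma smul {g : GL (Fin 2) ℂ} (hg : IsUnimodularIn d g) (hf : IsWalk d n f) :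
    IsWalk d n (fun k => g • f k) :=
  fun k hk => (hf k hk).smul hg

lemma reverse (hf : IsWalk d n f) : IsWalk d n (fun k => f (n - k)) := by
  intro k hk
  have h := (hf (n - (k + 1)) (by omega)).symm
  rwa [show n - (k + 1) + 1 = n - k by omega] at h

lemma append (hf : IsWalk d m f) (hf' : IsWalk d n f') (h : f m = f' 0) :
    IsWalk d (m + n) (fun k => if k ≤ m then f k else f' (k - m)) := by
  intro k hk
  by_cases hkm : k < m
  · simpa [hkm.le, Nat.succ_le_of_lt hkm] using hf k hkm
  · have h' := hf' (k - m) (by omega)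
    rw [show k - m + 1 = k + 1 - m by omega] at h'
    rcases eq_or_lt_of_le (not_lt.mp hkm) with rfl | hlt
    · simpa [h] using h'
    · simpa [hlt.not_ge, show ¬k + 1 ≤ m by omega] using h'

end IsWalk

lemma IsGeodesicWalk.le_add {n j L : ℕ} {f g : ℕ → OnePoint ℂ} (hf : IsGeodesicWalk d n f)
    (hj : j ≤ n) (hg : IsWalk d L g) (hg₀ : g 0 = f j) (hgL : g L = f n) : n ≤ j + L :=
  hf.2 (j + L) _ (IsWalk.append (fun k hk => hf.1 k (by omega)) hg hg₀.symm) (by simp)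
    (by rcases L.eq_zero_or_pos with rfl | hL
        · simp [← hg₀, hgL]
        · simp [hL.ne', hgL])

/-- `cfMat a k = [[p_{k-1}, p_k], [q_{k-1}, q_k]]`, with `p_{-1} = 1`, `q_{-1} = 0`. -/
noncomputable def cfMat (a : ℕ → ℂ) : ℕ → Matrix (Fin 2) (Fin 2) ℂ
  | 0 => 1
  | k + 1 => cfMat a k * !![0, 1; 1, a (k + 1)]

section cfMat

variable (a : ℕ → ℂ)

lemma cfMat_succ_apply_zero (k : ℕ) (i : Fin 2) : cfMat a (k + 1) i 0 = cfMat a k i 1 := by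
  simp [cfMat, mul_apply, Fin.sum_univ_two]

lemma cfMat_succ_apply_one (k : ℕ) (i : Fin 2) :
    cfMat a (k + 1) i 1 = a (k + 1) * cfMat a k i 1 + cfMat a k i 0 := by
  simp [cfMat, mul_apply, Fin.sum_univ_two]
  ring

lemma cfMat_apply_one : ∀ k, cfMat a k 0 1 = cfP a k ∧ cfMat a k 1 1 = cfQ a k
  | 0 => by simp [cfMat, cfP, cfQ]
  | 1 => by simp [cfMat, cfP, cfQ]
  | k + 2 => by
    simp only [cfMat_succ_apply_one, cfMat_succ_apply_zero, cfP, cfQ,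
      (cfMat_apply_one (k + 1)).1, (cfMat_apply_one (k + 1)).2, (cfMat_apply_one k).1,
      (cfMat_apply_one k).2, and_self]

lemma cfWalk_eq_divC_cfMat (k : ℕ) : cfWalk a k = divC (cfMat a k 0 0) (cfMat a k 1 0) := by
  cases k with
  | zero => simp [cfWalk, cfMat, divC]
  | succ k => simp [cfWalk, cfMat_succ_apply_zero, cfMat_apply_one]

lemma cfWalk_succ_eq_divC_cfMat (k : ℕ) :
    cfWalk a (k + 1) = divC (cfMat a k 0 1) (cfMat a k 1 1) := by
  rw [cfWalk_eq_divC_cfMat, cfMat_succ_apply_zero, cfMat_succ_apply_zero]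

lemma isUnimodularIn_cfMat {n : ℕ} (ha : ∀ i, 1 ≤ i → i ≤ n → a i ∈ ringInt d) :
    ∀ k ≤ n, IsUnimodularIn d (cfMat a k)
  | 0, _ => by
    refine ⟨fun i j => ?_, by simp [cfMat]⟩
    fin_cases i <;> fin_cases j
    exacts [⟨1, 0, by simp [cfMat]⟩, ⟨0, 0, by simp [cfMat]⟩, ⟨0, 0, by simp [cfMat]⟩,
      ⟨1, 0, by simp [cfMat]⟩]
  | k + 1, hk => by
    refine (isUnimodularIn_cfMat ha k (by omega)).mul ⟨fun i j => ?_, by simp⟩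
    fin_cases i <;> fin_cases j
    exacts [⟨0, 0, by simp⟩, ⟨1, 0, by simp⟩, ⟨1, 0, by simp⟩, ha (k + 1) (by omega) hk]

lemma isWalk_cfWalk {n : ℕ} (ha : ∀ i, 1 ≤ i → i ≤ n → a i ∈ ringInt d) :
    IsWalk d (n + 1) (cfWalk a) := by
  intro k hk
  rw [cfWalk_eq_divC_cfMat, cfWalk_succ_eq_divC_cfMat]
  exact (isUnimodularIn_cfMat a ha k (by omega)).fareyAdj_columns

end cfMat

lemma cfMat_add (a : ℕ → ℂ) (j m : ℕ) :
    cfMat a (j + m) = cfMat a j * (cfMat (fun i => a (j + m + 1 - i)) m)ᵀ := by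
  induction m generalizing j with
  | zero => simp [cfMat]
  | succ m ih =>
    have hstep : a (j + (m + 1) + 1 - (m + 1)) = a (j + 1) := by congr 1; omega
    rw [show j + (m + 1) = j + 1 + m by omega, ih (j + 1),
      show j + 1 + m + 1 = j + (m + 1) + 1 by omega]
    simp only [cfMat, transpose_mul, hstep, ← Matrix.mul_assoc]
    congr 2
    ext i k; fin_cases i <;> fin_cases k <;> rfl

lemma transpose_mul_skew_mul_self {R : Type*} [CommRing R] (N : Matrix (Fin 2) (Fin 2) R) :
    Nᵀ * !![0, 1; -1, 0] * N = N.det • !![0, 1; -1, 0] := by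
  ext i k; fin_cases i <;> fin_cases k <;> simp [mul_apply, Fin.sum_univ_two, det_fin_two] <;> ring

lemma exists_smul_cfWalk_reverse {a : ℕ → ℂ} {j m : ℕ}
    (ha : ∀ i, 1 ≤ i → i ≤ j + m → a i ∈ ringInt d) :
    ∃ T : GL (Fin 2) ℂ, IsUnimodularIn d T ∧ T • ∞ = cfWalk a (j + m + 1) ∧
      T • cfWalk (fun i => a (j + m + 1 - i)) (m + 1) = cfWalk a j := by
  set b := fun i => a (j + m + 1 - i)
  set J : Matrix (Fin 2) (Fin 2) ℂ := !![0, 1; -1, 0]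
  have hJ : IsUnimodularIn d J := by
    refine ⟨fun i k => ?_, by simp [J]⟩
    fin_cases i <;> fin_cases k
    exacts [⟨0, 0, by simp [J]⟩, ⟨1, 0, by simp [J]⟩, ⟨-1, 0, by simp [J]⟩, ⟨0, 0, by simp [J]⟩]
  have hT := (isUnimodularIn_cfMat a ha _ le_rfl).mul hJ
  refine ⟨.mkOfDetNeZero _ hT.det_ne_zero, hT, ?_, ?_⟩
  · rw [show (∞ : OnePoint ℂ) = divC 1 0 from (if_pos rfl).symm, smul_divC _ (by simp),
      cfWalk_succ_eq_divC_cfMat, ← divC_mul_mul (neg_ne_zero.mpr one_ne_zero)]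
    simp [J, mul_apply, Fin.sum_univ_two]
  · have hb := isUnimodularIn_cfMat b (fun i h₁ h₂ => ha _ (by omega) (by omega)) m le_rfl
    have hcol : ¬(cfMat b m 0 1 = 0 ∧ cfMat b m 1 1 = 0) := fun h =>
      hb.det_ne_zero (by simp [det_fin_two, h.1, h.2])
    have hprod : cfMat a (j + m) * J * cfMat b m = (cfMat b m).det • (cfMat a j * J) := by
      rw [cfMat_add, Matrix.mul_assoc, Matrix.mul_assoc, ← Matrix.mul_assoc _ J,
        transpose_mul_skew_mul_self, Matrix.mul_smul]
    rw [cfWalk_succ_eq_divC_cfMat, smul_divC _ hcol, cfWalk_eq_divC_cfMat a j,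
      ← divC_mul_mul hb.det_ne_zero (cfMat a j 0 0)]
    congr 1 <;> simpa [J, mul_apply, Fin.sum_univ_two] using congrFun (congrFun hprod _) 1

theorem reversed_expansion_geodesic_general (d : ℕ)
    (n : ℕ) (a : ℕ → ℂ)
    (ha : ∀ k, 1 ≤ k → k ≤ n → a k ∈ ringInt d)
    (hgeo : ∀ m ≤ n, IsGeodesicWalk d (m + 1) (cfWalk a)) :
    ∀ m ≤ n, IsGeodesicWalk d (m + 1) (cfWalk (fun k => a (n + 1 - k))) := by
  intro m hm
  obtain ⟨j, rfl⟩ : ∃ j, n = j + m := ⟨n - m, by omega⟩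
  refine ⟨isWalk_cfWalk _ fun i h₁ h₂ => ha _ (by omega) (by omega), fun L g hg hg₀ hgL => ?_⟩
  obtain ⟨T, hT, hT₀, hTL⟩ := exists_smul_cfWalk_reverse ha
  have := (hgeo (j + m) le_rfl).le_add (j := j) (by omega) ((hg.smul hT).reverse)
    (by simp [hgL, hTL]) (by simpa [hg₀, cfWalk] using hT₀)
  omega

/-- Let `d ∈ {1,2,3,7,11}` and `a₁, …, a_n ∈ ℤ[ω_d]`. If
`R = [a₁,…,a_n]` is a geodesic continued fraction expansion (every walk
`∞ → 0 → [a₁] → ⋯ → [a₁,…,a_m]` along its convergents is a geodesic path in the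
Farey graph `E_d`), then the reversed expansion `R* = [a_n, a_{n−1}, …, a₁]` is
also a geodesic continued fraction expansion. -/
theorem reversed_expansion_geodesic (d : ℕ) (hd : d ∈ ({1, 2, 3, 7, 11} : Set ℕ))
    (n : ℕ) (hn : 1 ≤ n) (a : ℕ → ℂ)
    (ha : ∀ k, 1 ≤ k → k ≤ n → a k ∈ ringInt d)
    (hgeo : ∀ m ≤ n, IsGeodesicWalk d (m + 1) (cfWalk a)) :
    ∀ m ≤ n, IsGeodesicWalk d (m + 1) (cfWalk (fun k => a (n + 1 - k))) :=
  reversed_expansion_geodesic_general d n a ha hgeo
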